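/- If 𝒢 ⇉ M is a boundary action groupoid and V ⊆ M is an open subset, then the reduction 𝒢|_V ⇉ V is a boundary action groupoid; its unique open dense orbit is U ∩ V, where U is the open dense orbit of 𝒢. -/

import Mathlib

/-!
We model a (locally compact / Lie) groupoid `𝒢 ⇉ U` over a set of units
`U ⊆ X` by a type `A` of arrows together with (total) structural maps;
multiplication is a total function whose value is only relevant on composable
pairs.  Smoothness is modelled at the topological level.
-/

universe u v

/-- An (algebraic) groupoid with arrow space `A` over the set of units `U ⊆ X`. -/
structure GroupoidOn (X : Type u) (A : Type v) (U : Set X) where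
  d : A → X
  r : A → X
  unit : U → A
  inv : A → A
  mul : A → A → A
  d_mem : ∀ g, d g ∈ U
  r_mem : ∀ g, r g ∈ U
  d_unit : ∀ x : U, d (unit x) = x
  r_unit : ∀ x : U, r (unit x) = x
  d_inv : ∀ g, d (inv g) = r g
  r_inv : ∀ g, r (inv g) = d g
  d_mul : ∀ g h, d g = r h → d (mul g h) = d h
  r_mul : ∀ g h, d g = r h → r (mul g h) = r g
  mul_assoc' : ∀ g h k, d g = r h → d h = r k → mul (mul g h) k = mul g (mul h k)
  unit_mul : ∀ g, mul (unit ⟨r g, r_mem g⟩) g = g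
  mul_unit : ∀ g, mul g (unit ⟨d g, d_mem g⟩) = g
  mul_inv : ∀ g, mul g (inv g) = unit ⟨r g, r_mem g⟩
  inv_mul : ∀ g, mul (inv g) g = unit ⟨d g, d_mem g⟩

namespace GroupoidOn

variable {X : Type u} {A : Type v} {U : Set X}

/-- The reduction set `𝒢|_V = d⁻¹(V) ∩ r⁻¹(V)` of a groupoid to `V ⊆ X`. -/
def res (G : GroupoidOn X A U) (V : Set X) : Set A :=
  {g | G.d g ∈ V ∧ G.r g ∈ V}

end GroupoidOn

/-- `G` is a topological groupoid: continuous structural maps, `d` surjective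
(onto the units) and open. Together with local compactness of the arrow and unit
spaces this is the notion of a locally compact groupoid. -/
structure IsTopGroupoid {X : Type u} {A : Type v} {U : Set X}
    [TopologicalSpace X] [TopologicalSpace A] (G : GroupoidOn X A U) : Prop where
  continuous_d : Continuous G.d
  continuous_r : Continuous G.r
  continuous_unit : Continuous G.unit
  continuous_inv : Continuous G.inv
  continuousOn_mul : ContinuousOn (fun p : A × A => G.mul p.1 p.2)
    {p : A × A | G.d p.1 = G.r p.2}
  d_surj : U ⊆ Set.range G.d
  isOpenMap_d : IsOpenMap G.d

namespace GroupoidOn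

variable {X : Type u} {A : Type v} {U : Set X}

/-- A subset `S` of the units is invariant if the range of any arrow whose
domain lies in `S` also lies in `S`. -/
def IsInvariant (G : GroupoidOn X A U) (S : Set X) : Prop :=
  ∀ g, G.d g ∈ S → G.r g ∈ S

end GroupoidOn

/-- The pair groupoid of a subset `S ⊆ X`. -/
def pairGroupoid {X : Type u} (S : Set X) : GroupoidOn X (S × S) S where
  d p := p.2
  r p := p.1
  unit x := (x, x)
  inv p := (p.2, p.1)
  mul p q := (p.1, q.2)
  d_mem p := p.2.2
  r_mem p := p.1.2
  d_unit _ := rfl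
  r_unit _ := rfl
  d_inv _ := rfl
  r_inv _ := rfl
  d_mul _ _ _ := rfl
  r_mul _ _ _ := rfl
  mul_assoc' _ _ _ _ _ := rfl
  unit_mul g := by ext <;> rfl
  mul_unit g := by ext <;> rfl
  mul_inv g := by ext <;> rfl
  inv_mul g := by ext <;> rfl

/-- A continuous right action of a (topological) group `Γ` on a space `Y`.
(In our applications this models a *smooth* action of a Lie group on a
manifold; smoothness is modelled at the topological level.) -/
structure ContRightAction (Γ : Type*) (Y : Type*) [Group Γ] [TopologicalSpace Γ]
    [TopologicalSpace Y] where
  act : Y → Γ → Y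
  act_one : ∀ y, act y 1 = y
  act_mul : ∀ y g h, act y (g * h) = act (act y g) h
  continuous_act : Continuous fun p : Y × Γ => act p.1 p.2

/-- The action groupoid `Y ⋊ Γ` of a continuous right action: arrows `Y × Γ`,
`r (y, g) = y`, `d (y, g) = y · g⁻¹`, and `(y, h)(y·h⁻¹, g) = (y, gh)`. -/
def actionGroupoid {Γ : Type*} {Y : Type*} [Group Γ] [TopologicalSpace Γ]
    [TopologicalSpace Y] (ρ : ContRightAction Γ Y) :
    GroupoidOn Y (Y × Γ) Set.univ where
  d p := ρ.act p.1 p.2⁻¹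
  r p := p.1
  unit y := (y.1, 1)
  inv p := (ρ.act p.1 p.2⁻¹, p.2⁻¹)
  mul p q := (p.1, q.2 * p.2)
  d_mem _ := trivial
  r_mem _ := trivial
  d_unit y := by simp [ρ.act_one]
  r_unit y := rfl
  d_inv p := by
    show ρ.act (ρ.act p.1 p.2⁻¹) (p.2⁻¹)⁻¹ = p.1
    rw [← ρ.act_mul]; simp [ρ.act_one]
  r_inv p := rfl
  d_mul p q h := by
    show ρ.act p.1 (q.2 * p.2)⁻¹ = ρ.act q.1 q.2⁻¹
    rw [mul_inv_rev, ρ.act_mul]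
    exact congrArg (fun z => ρ.act z q.2⁻¹) h
  r_mul _ _ _ := rfl
  mul_assoc' p q k _ _ := by simp [mul_assoc]
  unit_mul g := by simp
  mul_unit g := by simp
  mul_inv g := by simp
  inv_mul g := by simp

/-- `AreRedIso G V H W` : the reductions `G|_V` and `H|_W` are isomorphic as
topological groupoids, via a homeomorphism of the unit sets `V ≃ₜ W` and a
compatible homeomorphism of the arrow spaces preserving domain, range and
multiplication. -/
def AreRedIso {X : Type*} [TopologicalSpace X] {A : Type*} [TopologicalSpace A]
    {S : Set X} (G : GroupoidOn X A S) (V : Set X)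
    {Y : Type*} [TopologicalSpace Y] {B : Type*} [TopologicalSpace B]
    {T : Set Y} (H : GroupoidOn Y B T) (W : Set Y) : Prop :=
  ∃ (base : V ≃ₜ W) (e : {g : A // g ∈ G.res V} ≃ₜ {b : B // b ∈ H.res W}),
    (∀ g : {g : A // g ∈ G.res V}, H.d (e g).1 = (base ⟨G.d g.1, g.2.1⟩ : Y)) ∧
    (∀ g : {g : A // g ∈ G.res V}, H.r (e g).1 = (base ⟨G.r g.1, g.2.2⟩ : Y)) ∧
    (∀ (g h : {g : A // g ∈ G.res V}) (hc : G.d g.1 = G.r h.1),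
      (e ⟨G.mul g.1 h.1,
          ⟨by rw [G.d_mul _ _ hc]; exact h.2.1,
           by rw [G.r_mul _ _ hc]; exact g.2.2⟩⟩).1 = H.mul (e g).1 (e h).1)

/-- `OrbitData G U` : `U` is an open dense invariant subset of the unit set `S`
of `G` on which `G` is the pair groupoid (`𝒢_U ≅ U × U`); such a `U` is the
(unique) open dense orbit of a boundary action groupoid. -/
def OrbitData {X : Type u} [TopologicalSpace X] {A : Type v} [TopologicalSpace A]
    {S : Set X} (G : GroupoidOn X A S) (U : Set X) : Prop :=
  U ⊆ S ∧ IsOpen U ∧ S ⊆ closure U ∧ G.IsInvariant U ∧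
    AreRedIso G U (pairGroupoid U) U

/-- `𝒢 ⇉ S` is a **boundary action groupoid**: a (Lie) groupoid, with an open
dense invariant subset `U` of the units on which it is the pair groupoid,
covered by reductions of action groupoids of (Lie) group actions, the family of
these reductions satisfying the weak gluing condition.  (Smoothness is modelled
at the topological level.) -/
structure IsBoundaryActionGroupoid {X : Type u} [TopologicalSpace X] {A : Type u}
    [TopologicalSpace A] {S : Set X} (G : GroupoidOn X A S) : Prop where
  top : IsTopGroupoid G
  -- (1) an open dense invariant subset `U ⊆ S` with `𝒢_U ≅ U × U`:
  orbit : ∃ U : Set X, OrbitData G U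
  -- (2) + (3) an open cover of the unit space by sets over which `𝒢` is a
  -- reduction of an action groupoid, satisfying the weak gluing condition:
  cover : ∃ (ι : Type u) (V : ι → Set X),
    (∀ i, IsOpen (V i)) ∧ (∀ x ∈ S, ∃ i, x ∈ V i) ∧
    (∀ i, ∃ (Y : Type u) (tY : TopologicalSpace Y) (Γ : Type u) (gΓ : Group Γ)
      (tΓ : TopologicalSpace Γ) (_ : @IsTopologicalGroup Γ tΓ gΓ)
      (ρ : @ContRightAction Γ Y gΓ tΓ tY) (W : Set Y),
      @IsOpen Y tY W ∧
      @AreRedIso X _ A _ S G (V i) Y tY (Y × Γ) (@instTopologicalSpaceProd Y Γ tY tΓ)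
        Set.univ (@actionGroupoid Γ Y gΓ tΓ tY ρ) W) ∧
    (∀ g h : A, G.d g = G.r h → ∃ i, g ∈ G.res (V i) ∧ h ∈ G.res (V i))

/-!
Everything is transported from `𝒢|_V` along `e`. Reduction isomorphisms compose and restrict:
if `𝒢|_V ≅ ℋ|_W` with `W` open, then every open `V₀ ⊆ V` has `𝒢|_{V₀} ≅ ℋ|_{W₀}` for an open
`W₀ ⊆ W`. Hence each action chart `𝒢|_{Vᵢ} ≅ (Yᵢ ⋊ Γᵢ)|_{Wᵢ}` restricts to a chart over `Vᵢ ∩ V`,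
and `𝒢|_{U ∩ V}` is the reduction of the pair groupoid `U × U` to an open subset, i.e. again a pair
groupoid; `U ∩ V` is dense in `V` because `V` is open. Weak gluing passes to the reduction because
composable arrows of `𝒢|_V` are composable in `𝒢`.

The open dense orbit is unique: two such sets `U₁`, `U₂` meet at some `x`, every `y ∈ U₁` is
joined to `x` by an arrow of the pair groupoid `U₁ × U₁`, and `U₂` is invariant, so `U₁ ⊆ U₂`.
-/

universe w

namespace GroupoidOn

variable {X : Type*} {A : Type*} {U : Set X} (G : GroupoidOn X A U)

theorem unit_mul_of_r_eq {g : A} {x : U} (h : G.r g = x) : G.mul (G.unit x) g = g := by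
  obtain ⟨x, hx⟩ := x
  subst h
  exact G.unit_mul g

theorem mul_unit_of_d_eq {g : A} {x : U} (h : G.d g = x) : G.mul g (G.unit x) = g := by
  obtain ⟨x, hx⟩ := x
  subst h
  exact G.mul_unit g

theorem mul_inv_of_r_eq {g : A} {x : U} (h : G.r g = x) : G.mul g (G.inv g) = G.unit x := by
  obtain ⟨x, hx⟩ := x
  subst h
  exact G.mul_inv g

theorem inv_mul_of_d_eq {g : A} {x : U} (h : G.d g = x) : G.mul (G.inv g) g = G.unit x := by
  obtain ⟨x, hx⟩ := x
  subst h
  exact G.inv_mul g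

theorem eq_unit_of_mul_self {g : A} {x : U} (hd : G.d g = x) (hr : G.r g = x)
    (h : G.mul g g = g) : g = G.unit x :=
  calc g = G.mul g (G.mul g (G.inv g)) := by
          rw [G.mul_inv_of_r_eq hr, G.mul_unit_of_d_eq hd]
    _ = G.mul g (G.inv g) := by rw [← G.mul_assoc' _ _ _ (hd.trans hr.symm) (G.r_inv g).symm, h]
    _ = G.unit x := G.mul_inv_of_r_eq hr

theorem eq_inv_of_mul_eq_unit {g h : A} (hc : G.d g = G.r h) {x : U}
    (hgh : G.mul g h = G.unit x) : h = G.inv g := by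
  have hx : G.d (G.inv g) = x := by
    rw [G.d_inv, ← G.r_mul g h hc, hgh, G.r_unit]
  calc h = G.mul (G.mul (G.inv g) g) h := by
          rw [G.inv_mul_of_d_eq (x := ⟨G.r h, G.r_mem h⟩) hc, G.unit_mul_of_r_eq rfl]
    _ = G.mul (G.inv g) (G.unit x) := by rw [G.mul_assoc' _ _ _ (G.d_inv g) hc, hgh]
    _ = G.inv g := G.mul_unit_of_d_eq hx

def resMul (G : GroupoidOn X A U) {V : Set X} (g h : G.res V) (hc : G.d g.1 = G.r h.1) :
    G.res V :=
  ⟨G.mul g h, by rw [G.d_mul _ _ hc]; exact h.2.1, by rw [G.r_mul _ _ hc]; exact g.2.2⟩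

def resInv (G : GroupoidOn X A U) {V : Set X} (g : G.res V) : G.res V :=
  ⟨G.inv g, by rw [G.d_inv]; exact g.2.2, by rw [G.r_inv]; exact g.2.1⟩

def resUnit (G : GroupoidOn X A Set.univ) {V : Set X} (x : V) : G.res V :=
  ⟨G.unit ⟨x, trivial⟩, by rw [G.d_unit]; exact x.2, by rw [G.r_unit]; exact x.2⟩

end GroupoidOn

def Homeomorph.restrictSubtype {α β : Type*} [TopologicalSpace α] [TopologicalSpace β]
    {p p' : α → Prop} {q q' : β → Prop} (e : Subtype p ≃ₜ Subtype q)
    (hp : ∀ x, p' x → p x) (hq : ∀ y, q' y → q y) (h : ∀ x, p' x.1 ↔ q' (e x).1) :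
    Subtype p' ≃ₜ Subtype q' where
  toFun x := ⟨e ⟨x, hp _ x.2⟩, (h _).1 x.2⟩
  invFun y := ⟨e.symm ⟨y, hq _ y.2⟩, (h _).2 (by simpa using y.2)⟩
  left_inv x := by simp
  right_inv y := by simp
  continuous_toFun := by fun_prop
  continuous_invFun := by fun_prop

section AreRedIso

variable {X A Y B Z C : Type*} [TopologicalSpace X] [TopologicalSpace A] [TopologicalSpace Y]
  [TopologicalSpace B] [TopologicalSpace Z] [TopologicalSpace C] {S : Set X} {T : Set Y}
  {R : Set Z} {G : GroupoidOn X A S} {H : GroupoidOn Y B T} {K : GroupoidOn Z C R}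
  {V : Set X} {W : Set Y} {Q : Set Z}

theorem AreRedIso.trans (h₁ : AreRedIso G V H W) (h₂ : AreRedIso H W K Q) :
    AreRedIso G V K Q := by
  obtain ⟨b₁, e₁, hd₁, hr₁, hm₁⟩ := h₁
  obtain ⟨b₂, e₂, hd₂, hr₂, hm₂⟩ := h₂
  refine ⟨b₁.trans b₂, e₁.trans e₂, fun g => ?_, fun g => ?_, fun g h hc => ?_⟩
  · rw [Homeomorph.trans_apply, hd₂]
    exact congrArg (fun x => (b₂ x : Z)) (Subtype.ext (hd₁ g))
  · rw [Homeomorph.trans_apply, hr₂]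
    exact congrArg (fun x => (b₂ x : Z)) (Subtype.ext (hr₁ g))
  · have hc' : H.d (e₁ g) = H.r (e₁ h) := by
      rw [hd₁, hr₁]
      exact congrArg (fun x => (b₁ x : Y)) (Subtype.ext hc)
    have he₁ : e₁ (G.resMul g h hc) = H.resMul (e₁ g) (e₁ h) hc' := Subtype.ext (hm₁ g h hc)
    show (e₂ (e₁ (G.resMul g h hc)) : C) = _
    rw [he₁]
    exact hm₂ _ _ hc'

theorem AreRedIso.restrict (h : AreRedIso G V H W) {V₀ : Set X} (hV₀ : V₀ ⊆ V)
    (hV₀o : IsOpen V₀) (hW : IsOpen W) : ∃ W₀ ⊆ W, IsOpen W₀ ∧ AreRedIso G V₀ H W₀ := by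
  obtain ⟨b, e, hd, hr, hm⟩ := h
  set W₀ : Set Y := Subtype.val '' (b '' (Subtype.val ⁻¹' V₀))
  have hmem (x : V) : (b x : Y) ∈ W₀ ↔ (x : X) ∈ V₀ := by
    simp [W₀, Subtype.val_injective.eq_iff, b.injective.eq_iff]
  have hW₀ : W₀ ⊆ W := by simp [W₀]
  refine ⟨W₀, hW₀, hW.isOpenMap_subtype_val _
    (b.isOpenMap _ (hV₀o.preimage continuous_subtype_val)), ?_⟩
  have hres : ∀ g, g ∈ G.res V₀ → g ∈ G.res V := fun g hg => ⟨hV₀ hg.1, hV₀ hg.2⟩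
  refine ⟨b.restrictSubtype (fun x hx => hV₀ hx) (fun y hy => hW₀ hy) fun x => (hmem x).symm,
    e.restrictSubtype hres (fun g hg => ⟨hW₀ hg.1, hW₀ hg.2⟩) fun g => ?_,
    fun g => hd _, fun g => hr _, fun g h hc => hm ⟨g, hres _ g.2⟩ ⟨h, hres _ h.2⟩ hc⟩
  show _ ∧ _ ↔ _ ∧ _
  rw [hd, hr, hmem, hmem]

theorem AreRedIso.exists_arrow_of_pairGroupoid {U : Set X}
    (h : AreRedIso G U (pairGroupoid U) U) (p q : U) :
    ∃ g : G.res U, G.r g = p ∧ G.d g = q := by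
  obtain ⟨b, e, hd, hr, -⟩ := h
  set g := e.symm ⟨(b p, b q), (b q).2, (b p).2⟩
  have hdg := hd g
  have hrg := hr g
  simp only [g, e.apply_symm_apply] at hdg hrg
  exact ⟨g, congrArg Subtype.val (b.injective (Subtype.ext hrg)).symm,
    congrArg Subtype.val (b.injective (Subtype.ext hdg)).symm⟩

end AreRedIso

theorem areRedIso_pairGroupoid {X Y : Type*} [TopologicalSpace X] [TopologicalSpace Y]
    {U W : Set X} {T : Set Y} (hW : W ⊆ U) (φ : W ≃ₜ T) :
    AreRedIso (pairGroupoid U) W (pairGroupoid T) T := by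
  refine ⟨φ,
    { toFun := fun p => ⟨(φ ⟨p.1.1, p.2.2⟩, φ ⟨p.1.2, p.2.1⟩), (φ _).2, (φ _).2⟩
      invFun := fun q => ⟨(⟨φ.symm q.1.1, hW (φ.symm _).2⟩, ⟨φ.symm q.1.2, hW (φ.symm _).2⟩),
        (φ.symm _).2, (φ.symm _).2⟩
      left_inv := fun p => by simp
      right_inv := fun q => Subtype.ext (Prod.ext (φ.apply_symm_apply _) (φ.apply_symm_apply _))
      continuous_toFun := by fun_prop
      continuous_invFun := by fun_prop },
    fun _ => rfl, fun _ => rfl, fun _ _ _ => rfl⟩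

section OrbitData

variable {X A : Type*} [TopologicalSpace X] [TopologicalSpace A] {S : Set X}
  {G : GroupoidOn X A S}

theorem OrbitData.subset {U₁ U₂ : Set X} (h₁ : OrbitData G U₁) (h₂ : OrbitData G U₂) :
    U₁ ⊆ U₂ := by
  obtain ⟨hU₁S, hU₁o, -, -, hU₁p⟩ := h₁
  obtain ⟨-, -, hU₂d, hU₂i, -⟩ := h₂
  intro y hy
  obtain ⟨x, hx₁, hx₂⟩ := mem_closure_iff.1 (hU₂d (hU₁S hy)) U₁ hU₁o hy
  obtain ⟨g, hgr, hgd⟩ := hU₁p.exists_arrow_of_pairGroupoid ⟨y, hy⟩ ⟨x, hx₁⟩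
  simpa [hgr] using hU₂i g (hgd ▸ hx₂)

theorem OrbitData.eq {U₁ U₂ : Set X} (h₁ : OrbitData G U₁) (h₂ : OrbitData G U₂) : U₁ = U₂ :=
  (h₁.subset h₂).antisymm (h₂.subset h₁)

end OrbitData

def IsActionChart {X A : Type*} [TopologicalSpace X] [TopologicalSpace A] {S : Set X}
    (G : GroupoidOn X A S) (V₀ : Set X) : Prop :=
  ∃ (Y : Type w) (tY : TopologicalSpace Y) (Γ : Type w) (gΓ : Group Γ)
    (tΓ : TopologicalSpace Γ) (_ : @IsTopologicalGroup Γ tΓ gΓ)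
    (ρ : @ContRightAction Γ Y gΓ tΓ tY) (W : Set Y),
    @IsOpen Y tY W ∧
    @AreRedIso X _ A _ S G V₀ Y tY (Y × Γ) (@instTopologicalSpaceProd Y Γ tY tΓ)
      Set.univ (@actionGroupoid Γ Y gΓ tΓ tY ρ) W

section IsActionChart

variable {X A : Type*} [TopologicalSpace X] [TopologicalSpace A] {S : Set X}
  {G : GroupoidOn X A S}

theorem IsActionChart.mono {V₁ V₀ : Set X} (hc : IsActionChart.{w} G V₁) (hV₀ : V₀ ⊆ V₁)
    (hV₀o : IsOpen V₀) : IsActionChart.{w} G V₀ := by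
  obtain ⟨Y, tY, Γ, gΓ, tΓ, hΓ, ρ, W, hW, hiso⟩ := hc
  obtain ⟨W₀, -, hW₀, hiso₀⟩ := hiso.restrict hV₀ hV₀o hW
  exact ⟨Y, tY, Γ, gΓ, tΓ, hΓ, ρ, W₀, hW₀, hiso₀⟩

theorem IsActionChart.of_areRedIso {X' A' : Type*} [TopologicalSpace X'] [TopologicalSpace A']
    {S' : Set X'} {G' : GroupoidOn X' A' S'} {V : Set X} {V' : Set X'}
    (hc : IsActionChart.{w} G V) (hiso : AreRedIso G' V' G V) : IsActionChart.{w} G' V' := by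
  obtain ⟨Y, tY, Γ, gΓ, tΓ, hΓ, ρ, W, hW, hcW⟩ := hc
  exact ⟨Y, tY, Γ, gΓ, tΓ, hΓ, ρ, W, hW, hiso.trans hcW⟩

end IsActionChart

structure IsReductionIso {X A A' : Type*} [TopologicalSpace X] [TopologicalSpace A]
    [TopologicalSpace A'] (G : GroupoidOn X A Set.univ) (V : Set X)
    (G' : GroupoidOn V A' Set.univ) (e : G.res V ≃ₜ A') : Prop where
  d_apply (g : G.res V) : (G'.d (e g) : X) = G.d g
  r_apply (g : G.res V) : (G'.r (e g) : X) = G.r g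
  mul_apply (g h : G.res V) (hc : G.d g.1 = G.r h.1) : e (G.resMul g h hc) = G'.mul (e g) (e h)

namespace IsReductionIso

variable {X A A' : Type*} [TopologicalSpace X] [TopologicalSpace A] [TopologicalSpace A']
  {G : GroupoidOn X A Set.univ} {V : Set X} {G' : GroupoidOn V A' Set.univ}
  {e : G.res V ≃ₜ A'} (h : IsReductionIso G V G' e)
include h

theorem d_symm (a : A') : G.d (e.symm a) = G'.d a := by
  simpa using (h.d_apply (e.symm a)).symm

theorem r_symm (a : A') : G.r (e.symm a) = G'.r a := by
  simpa using (h.r_apply (e.symm a)).symm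

theorem d_symm_eq_r_symm {a b : A'} (hab : G'.d a = G'.r b) :
    G.d (e.symm a) = G.r (e.symm b) := by
  rw [h.d_symm, h.r_symm, hab]

theorem mem_res_preimage_iff {S₀ : Set X} {a : A'} :
    a ∈ G'.res (Subtype.val ⁻¹' S₀) ↔ (e.symm a : A) ∈ G.res S₀ := by
  show _ ∧ _ ↔ _ ∧ _
  rw [h.d_symm, h.r_symm]
  rfl

theorem mul_eq {a b : A'} (hab : G'.d a = G'.r b) :
    G'.mul a b = e (G.resMul (e.symm a) (e.symm b) (h.d_symm_eq_r_symm hab)) := by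
  simp [h.mul_apply]

theorem unit_eq (x : (Set.univ : Set V)) : G'.unit x = e (G.resUnit x.1) := by
  set u : G.res V := G.resUnit x.1
  have hd : G.d u = x.1.1 := G.d_unit _
  have hr : G.r u = x.1.1 := G.r_unit _
  have hunit : G.mul u u = u := G.unit_mul_of_r_eq hr
  refine (G'.eq_unit_of_mul_self ?_ ?_ ?_).symm
  · exact Subtype.ext ((h.d_apply _).trans hd)
  · exact Subtype.ext ((h.r_apply _).trans hr)
  · rw [← h.mul_apply _ _ (hd.trans hr.symm)]
    exact congrArg e (Subtype.ext hunit)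

theorem inv_eq (g : G.res V) : G'.inv (e g) = e (G.resInv g) := by
  have hc : G.d g = G.r (G.resInv g) := (G.r_inv g).symm
  refine (G'.eq_inv_of_mul_eq_unit (x := ⟨G'.r (e g), trivial⟩) ?_ ?_).symm
  · exact Subtype.ext ((h.d_apply g).trans (hc.trans (h.r_apply _).symm))
  · rw [← h.mul_apply _ _ hc, h.unit_eq]
    congr 1
    exact Subtype.ext (G.mul_inv_of_r_eq (h.r_apply g).symm)

theorem d_image (O : Set A') :
    G'.d '' O = Subtype.val ⁻¹' (G.d '' (Subtype.val '' (e ⁻¹' O))) := by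
  ext v
  constructor
  · rintro ⟨a, ha, rfl⟩
    exact ⟨e.symm a, ⟨e.symm a, by simpa using ha, rfl⟩, h.d_symm a⟩
  · rintro ⟨-, ⟨g, hg, rfl⟩, hgv⟩
    exact ⟨e g, hg, Subtype.ext ((h.d_apply g).trans hgv)⟩

theorem isOpenMap_d (hG : IsTopGroupoid G) (hV : IsOpen V) : IsOpenMap G'.d := by
  intro O hO
  rw [h.d_image]
  have hres : IsOpen (G.res V) :=
    (hV.preimage hG.continuous_d).inter (hV.preimage hG.continuous_r)
  exact (hG.isOpenMap_d _ (hres.isOpenMap_subtype_val _ (hO.preimage e.continuous))).preimage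
    continuous_subtype_val

theorem continuousOn_mul (hG : IsTopGroupoid G) :
    ContinuousOn (fun p : A' × A' => G'.mul p.1 p.2) {p | G'.d p.1 = G'.r p.2} := by
  rw [continuousOn_iff_continuous_domRestrict]
  have hmul : Set.domRestrict {p : A' × A' | G'.d p.1 = G'.r p.2} (fun p => G'.mul p.1 p.2)
      = fun p => e (G.resMul _ _ (h.d_symm_eq_r_symm p.2)) :=
    funext fun p => h.mul_eq p.2
  rw [hmul]
  have cm := continuousOn_iff_continuous_domRestrict.1 hG.continuousOn_mul
  have cm' : Continuous fun p : {p : A' × A' // G'.d p.1 = G'.r p.2} =>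
      G.mul (e.symm p.1.1) (e.symm p.1.2) := by
    exact cm.comp (f := fun p : {p : A' × A' // G'.d p.1 = G'.r p.2} =>
      ⟨((e.symm p.1.1).1, (e.symm p.1.2).1), h.d_symm_eq_r_symm p.2⟩) (by fun_prop)
  unfold GroupoidOn.resMul
  fun_prop

theorem isTopGroupoid (hG : IsTopGroupoid G) (hV : IsOpen V) : IsTopGroupoid G' := by
  have hd : G'.d = fun a => ⟨G.d (e.symm a), (e.symm a).2.1⟩ :=
    funext fun a => Subtype.ext (h.d_symm a).symm
  have hr : G'.r = fun a => ⟨G.r (e.symm a), (e.symm a).2.2⟩ :=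
    funext fun a => Subtype.ext (h.r_symm a).symm
  have hunit : G'.unit = fun x => e (G.resUnit x.1) := funext h.unit_eq
  have hinv : G'.inv = fun a => e (G.resInv (e.symm a)) :=
    funext fun a => by simpa using h.inv_eq (e.symm a)
  have cd := hG.continuous_d
  have cr := hG.continuous_r
  have cu := hG.continuous_unit
  have ci := hG.continuous_inv
  refine ⟨?_, ?_, ?_, ?_, h.continuousOn_mul hG, fun x _ => ⟨G'.unit ⟨x, trivial⟩, G'.d_unit _⟩,
    h.isOpenMap_d hG hV⟩
  · rw [hd]; fun_prop
  · rw [hr]; fun_prop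
  · rw [hunit]; unfold GroupoidOn.resUnit; fun_prop
  · rw [hinv]; unfold GroupoidOn.resInv; fun_prop

theorem areRedIso (S₀ : Set X) : AreRedIso G' (Subtype.val ⁻¹' S₀) G (S₀ ∩ V) := by
  have hmem (a : A') : a ∈ G'.res (Subtype.val ⁻¹' S₀) ↔ (e.symm a : A) ∈ G.res (S₀ ∩ V) := by
    show _ ∧ _ ↔ _ ∧ _
    rw [h.d_symm, h.r_symm]
    simp
  refine ⟨
    { toFun := fun x => ⟨x.1, x.2, x.1.2⟩
      invFun := fun y => ⟨⟨y, y.2.2⟩, y.2.1⟩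
      left_inv := fun _ => rfl
      right_inv := fun _ => rfl
      continuous_toFun := by fun_prop
      continuous_invFun := by fun_prop },
    { toFun := fun a => ⟨e.symm a, (hmem a).1 a.2⟩
      invFun := fun g => ⟨e ⟨g, g.2.1.2, g.2.2.2⟩, (hmem _).2 (by simp [g.2])⟩
      left_inv := fun a => Subtype.ext (by simp only [e.apply_symm_apply])
      right_inv := fun g => by simp
      continuous_toFun := by fun_prop
      continuous_invFun := by fun_prop },
    fun a => h.d_symm a, fun a => h.r_symm a, fun a b hc => ?_⟩
  simp [h.mul_eq hc, GroupoidOn.resMul]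

theorem orbitData (hV : IsOpen V) {U : Set X} (hU : OrbitData G U) :
    OrbitData G' (Subtype.val ⁻¹' (U ∩ V)) := by
  obtain ⟨-, hUo, hUd, hUi, hUp⟩ := hU
  have hdense : Dense (Subtype.val ⁻¹' (U ∩ V) : Set V) := by
    rw [Set.preimage_inter, Subtype.coe_preimage_self, Set.inter_univ]
    exact (dense_iff_closure_eq.2 (Set.univ_subset_iff.1 hUd)).preimage hV.isOpenMap_subtype_val
  refine ⟨Set.subset_univ _, (hUo.inter hV).preimage continuous_subtype_val,
    hdense.closure_eq.symm.subset, fun a ha => ⟨?_, (G'.r a).2⟩, ?_⟩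
  · rw [← h.r_symm]
    exact hUi _ (h.d_symm a ▸ ha.1)
  obtain ⟨W₀, hW₀U, -, hW₀⟩ :=
    hUp.restrict (V₀ := U ∩ V ∩ V) (fun x hx => hx.1.1) ((hUo.inter hV).inter hV) hUo
  have hiso := (h.areRedIso (U ∩ V)).trans hW₀
  exact hiso.elim fun β _ => hiso.trans (areRedIso_pairGroupoid hW₀U β.symm)

end IsReductionIso

namespace IsReductionIso

variable {X A A' : Type u} [TopologicalSpace X] [TopologicalSpace A] [TopologicalSpace A']
  {G : GroupoidOn X A Set.univ} {V : Set X} {G' : GroupoidOn V A' Set.univ}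
  {e : G.res V ≃ₜ A'} (h : IsReductionIso G V G' e)
include h

theorem isBoundaryActionGroupoid (hG : IsBoundaryActionGroupoid G) (hV : IsOpen V) :
    IsBoundaryActionGroupoid G' := by
  obtain ⟨U, hU⟩ := hG.orbit
  obtain ⟨ι, Vc, hVo, hcov, hchart, hglue⟩ := hG.cover
  refine ⟨h.isTopGroupoid hG.top hV, ⟨_, h.orbitData hV hU⟩,
    ι, fun i => Subtype.val ⁻¹' Vc i, fun i => (hVo i).preimage continuous_subtype_val,
    fun x _ => hcov x trivial, fun i => ?_, fun a b hab => ?_⟩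
  · have hchart_i : IsActionChart G (Vc i) := hchart i
    exact (hchart_i.mono Set.inter_subset_left ((hVo i).inter hV)).of_areRedIso
      (h.areRedIso (Vc i))
  · obtain ⟨i, ha, hb⟩ := hglue _ _ (h.d_symm_eq_r_symm hab)
    exact ⟨i, h.mem_res_preimage_iff.2 ha, h.mem_res_preimage_iff.2 hb⟩

end IsReductionIso

/-- If `𝒢 ⇉ M` is a boundary action groupoid and `V ⊆ M` is
an open subset, then the reduction `𝒢|_V ⇉ V` is a boundary action groupoid;
its unique open dense orbit is `U ∩ V`, where `U` is the open dense orbit of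
`𝒢`.  (The reduction is given here as any groupoid `𝒢' ⇉ V` identified with
`d⁻¹(V) ∩ r⁻¹(V)` through a homeomorphism `e` commuting with the structural
maps over the canonical inclusion `V → M`.) -/
theorem statement_9 {X : Type u} [TopologicalSpace X] {A : Type u} [TopologicalSpace A]
    (G : GroupoidOn X A Set.univ) (hG : IsBoundaryActionGroupoid G)
    (V : Set X) (hV : IsOpen V)
    {A' : Type u} [TopologicalSpace A']
    (G' : GroupoidOn (↥V) A' Set.univ)
    (e : {g : A // g ∈ G.res V} ≃ₜ A')
    (he_d : ∀ g : {g : A // g ∈ G.res V}, (G'.d (e g) : X) = G.d g.1)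
    (he_r : ∀ g : {g : A // g ∈ G.res V}, (G'.r (e g) : X) = G.r g.1)
    (he_mul : ∀ (g h : {g : A // g ∈ G.res V}) (hc : G.d g.1 = G.r h.1),
      e ⟨G.mul g.1 h.1,
         ⟨by rw [G.d_mul _ _ hc]; exact h.2.1,
          by rw [G.r_mul _ _ hc]; exact g.2.2⟩⟩ = G'.mul (e g) (e h)) :
    IsBoundaryActionGroupoid G' ∧
    ∀ U, OrbitData G U →
      OrbitData G' (Subtype.val ⁻¹' (U ∩ V)) ∧
      -- uniqueness of the open dense orbit of the reduction:
      ∀ W, OrbitData G' W → W = Subtype.val ⁻¹' (U ∩ V) := by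
  have h : IsReductionIso G V G' e := ⟨he_d, he_r, he_mul⟩
  exact ⟨h.isBoundaryActionGroupoid hG hV,
    fun U hU => ⟨h.orbitData hV hU, fun W hW => hW.eq (h.orbitData hV hU)⟩⟩
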